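/- arXiv:1901.10719 — 3 statements merged into one kernel-verified Lean document; each statement's English description precedes it below -/
import Mathlib

section
/- For any matrix M ∈ ℝ^{m×n} of rank r, there exist row and column index subsets P and Q of size r such that the submatrix S = M|_{P×Q} is invertible and the cross approximation M|_{(all rows)×Q} · S^{-1} · M|_{P×(all columns)} equals M exactly. -/
open Matrix Submodule Set

lemma exists_sel {ι : Type*} {V : Type*} [AddCommGroup V] [Module ℝ V]
    [FiniteDimensional ℝ V] (f : ι → V) {r : ℕ}
    (hr : Module.finrank ℝ (Submodule.span ℝ (Set.range f)) = r) :
    ∃ g : Fin r → ι, Function.Injective g ∧ LinearIndependent ℝ (f ∘ g) ∧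
      Submodule.span ℝ (Set.range (f ∘ g)) = Submodule.span ℝ (Set.range f) := by
  obtain ⟨t, hts, hspan, hli⟩ := exists_linearIndependent ℝ (Set.range f)
  have htfin : t.Finite := hli.setFinite
  have : Fintype t := htfin.fintype
  have hcard : Fintype.card t = r := by
    rw [← Set.toFinset_card, ← hr, ← hspan]
    exact (finrank_span_set_eq_card hli).symm
  let e : Fin r ≃ t := (Fintype.equivFinOfCardEq hcard).symm
  have hmem : ∀ i : Fin r, ((e i : V) ∈ Set.range f) := fun i => hts (e i).2
  choose g hg using hmem
  have hfg : f ∘ g = fun i => (e i : V) := funext fun i => hg i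
  have hvinj : Function.Injective (fun i : Fin r => (e i : V)) :=
    Subtype.val_injective.comp e.injective
  refine ⟨g, fun a b hab => hvinj (by simp only []; rw [← hg a, ← hg b, hab]), ?_, ?_⟩
  · rw [hfg]
    exact hli.comp e e.injective
  · rw [hfg, ← hspan]
    congr 1
    ext v
    constructor
    · rintro ⟨i, rfl⟩; exact (e i).2
    · intro hv; exact ⟨e.symm ⟨v, hv⟩, by simp⟩

/-- every matrix `M ∈ ℝ^{m×n}` of rank `r` admits row and column index
subsets `P`, `Q` of size `r` such that the submatrix `S = M|_{P×Q}` is invertible and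
the cross approximation `M(:,Q) · S⁻¹ · M(P,:)` equals `M` exactly. -/
theorem exists_exact_cross_approximation
    {m n : Type*} [Fintype m] [Fintype n] [DecidableEq m] [DecidableEq n]
    (M : Matrix m n ℝ) :
    ∃ (P : Fin M.rank → m) (Q : Fin M.rank → n),
      Function.Injective P ∧ Function.Injective Q ∧
      IsUnit (M.submatrix P Q) ∧
      M.submatrix id Q * (M.submatrix P Q)⁻¹ * M.submatrix P id = M := by
  set r := M.rank with hrdef
  -- rows
  have hrow : Module.finrank ℝ (Submodule.span ℝ (Set.range (fun i => M i))) = r := by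
    exact (M.rank_eq_finrank_span_row).symm
  obtain ⟨P, hPinj, hPli, hPspan⟩ := exists_sel (fun i => M i) hrow
  set Mp : Matrix (Fin r) n ℝ := M.submatrix P id with hMp
  have hMpfun : (fun i => Mp i) = (fun i => M i) ∘ P := rfl
  have hMprank : Mp.rank = r := by
    have := LinearIndependent.rank_matrix (M := Mp) (show LinearIndependent ℝ (fun i => Mp i) from hMpfun ▸ hPli)
    simpa using this
  -- columns
  have hcol : Module.finrank ℝ (Submodule.span ℝ (Set.range (fun j => Mpᵀ j))) = r := by
    have h := Mpᵀ.rank_eq_finrank_span_row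
    rw [Matrix.rank_transpose, hMprank] at h
    exact h.symm
  obtain ⟨Q, hQinj, hQli, hQspan⟩ := exists_sel (fun j => Mpᵀ j) hcol
  set S : Matrix (Fin r) (Fin r) ℝ := M.submatrix P Q with hS
  have hScols : (fun j => Sᵀ j) = (fun j => Mpᵀ j) ∘ Q := rfl
  have hSunit : IsUnit S := by
    rw [← Matrix.linearIndependent_cols_iff_isUnit]
    show LinearIndependent ℝ (fun j => Sᵀ j)
    rw [hScols]
    exact hQli
  -- coefficient matrix
  have hmem : ∀ i : m, (M i : n → ℝ) ∈ Submodule.span ℝ (Set.range ((fun i => M i) ∘ P)) := by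
    intro i
    rw [hPspan]
    exact Submodule.subset_span ⟨i, rfl⟩
  have hmem' : ∀ i : m, ∃ c : Fin r → ℝ, ∑ j, c j • ((fun i => M i) ∘ P) j = M i := by
    intro i
    exact (Submodule.mem_span_range_iff_exists_fun ℝ).mp (by simpa using hmem i)
  choose c hc using hmem'
  set C : Matrix m (Fin r) ℝ := Matrix.of c with hC
  have hCM : C * Mp = M := by
    ext i k
    have := congrFun (hc i) k
    simpa [Matrix.mul_apply, Mp, C, Matrix.of_apply, Matrix.submatrix_apply] using this
  have hMQ : M.submatrix id Q = C * S := by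
    rw [← hCM]
    ext i j
    simp [Matrix.mul_apply, Mp, S, Matrix.submatrix_apply]
  refine ⟨P, Q, hPinj, hQinj, hSunit, ?_⟩
  rw [show M.submatrix id Q = C * S from hMQ, Matrix.mul_assoc C S, Matrix.mul_nonsing_inv S ((Matrix.isUnit_iff_isUnit_det S).mp hSunit),
    Matrix.mul_one, hCM]
end

section
/- Hierarchical rank bounds are submultiplicative at interior nodes: for any tensor A and disjoint mode sets s_1, s_2 with t = s_1 ∪ s_2, rank(M^t(A)) ≤ rank(M^{s_1}(A)) · rank(M^{s_2}(A)). -/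
open Matrix


/-- The matricisation `M^t(A)` of a tensor with respect to a mode subset `t`. -/
def matricize {d : ℕ} {I : Fin d → Type*} (A : (∀ k, I k) → ℝ) (t : Finset (Fin d)) :
    Matrix (∀ k : {k // k ∈ t}, I k.1) (∀ k : {k // k ∉ t}, I k.1) ℝ :=
  fun r c => A (fun k => if h : k ∈ t then r ⟨k, h⟩ else c ⟨k, h⟩)

open Module in
/-- Auxiliary: given two subspaces of function spaces, there are spanning families `u`, `v`
(of sizes `finrank V₁`, `finrank V₂`) such that every "bi-slice" function lying in `V₁`
in its first argument and in `V₂` in its second argument decomposes as a double sum. -/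
lemma aux_prod_decomp {X₁ X₂ : Type*} [Fintype X₁] [Fintype X₂] [DecidableEq X₁]
    (V₁ : Submodule ℝ (X₁ → ℝ)) (V₂ : Submodule ℝ (X₂ → ℝ)) :
    ∃ (u : Fin (finrank ℝ V₁) → X₁ → ℝ) (v : Fin (finrank ℝ V₂) → X₂ → ℝ),
      ∀ B : X₁ → X₂ → ℝ, (∀ x₂, (fun x₁ => B x₁ x₂) ∈ V₁) → (∀ x₁, B x₁ ∈ V₂) →
        ∃ D : Fin (finrank ℝ V₁) → Fin (finrank ℝ V₂) → ℝ,
          ∀ x₁ x₂, B x₁ x₂ = ∑ i, ∑ j, D i j * u i x₁ * v j x₂ := by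
  classical
  set b₁ := finBasis ℝ V₁ with hb₁
  set b₂ := finBasis ℝ V₂ with hb₂
  choose φ hφ using fun i => LinearMap.exists_extend (b₁.coord i)
  refine ⟨fun i => ((b₁ i : V₁) : X₁ → ℝ), fun j => ((b₂ j : V₂) : X₂ → ℝ), ?_⟩
  intro B h₁ h₂
  -- representation of elements of V₁ via the extended coordinate functionals
  have hrepr₁ : ∀ (w : X₁ → ℝ) (hw : w ∈ V₁) (x : X₁),
      w x = ∑ i, φ i w * ((b₁ i : V₁) : X₁ → ℝ) x := by
    intro w hw x
    have hco : ∀ i, φ i w = b₁.repr ⟨w, hw⟩ i := by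
      intro i
      have := LinearMap.congr_fun (hφ i) ⟨w, hw⟩
      simpa [Basis.coord_apply] using this
    have hs := b₁.sum_repr ⟨w, hw⟩
    have := congrArg (fun z : V₁ => (z : X₁ → ℝ) x) hs
    simp only at this
    rw [← this]
    rw [Submodule.coe_sum]
    rw [Finset.sum_apply]
    refine Finset.sum_congr rfl fun i _ => ?_
    simp [hco i, mul_comm]
  have hrepr₂ : ∀ (w : X₂ → ℝ) (hw : w ∈ V₂) (x : X₂),
      w x = ∑ j, b₂.repr ⟨w, hw⟩ j * ((b₂ j : V₂) : X₂ → ℝ) x := by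
    intro w hw x
    have hs := b₂.sum_repr ⟨w, hw⟩
    have := congrArg (fun z : V₂ => (z : X₂ → ℝ) x) hs
    simp only at this
    rw [← this]
    rw [Submodule.coe_sum]
    rw [Finset.sum_apply]
    refine Finset.sum_congr rfl fun j _ => ?_
    simp [mul_comm]
  -- the coefficient functions lie in V₂
  set C : Fin (finrank ℝ V₁) → X₂ → ℝ := fun i x₂ => φ i (fun x₁ => B x₁ x₂) with hC
  have hCmem : ∀ i, C i ∈ V₂ := by
    intro i
    have hCi : C i = ∑ x₁ : X₁, φ i ((Pi.single x₁ 1 : X₁ → ℝ)) • B x₁ := by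
      funext x₂
      have hBx : (fun x₁ => B x₁ x₂) = ∑ x₁ : X₁, B x₁ x₂ • (Pi.single x₁ 1 : X₁ → ℝ) := by
        funext y
        rw [Finset.sum_apply]
        simp [Pi.single_apply]
      have : φ i (fun x₁ => B x₁ x₂) = ∑ x₁ : X₁, B x₁ x₂ * φ i ((Pi.single x₁ 1 : X₁ → ℝ)) := by
        rw [hBx, map_sum]
        simp [smul_eq_mul]
      simp only [hC]
      rw [this, Finset.sum_apply]
      refine Finset.sum_congr rfl fun x₁ _ => ?_
      simp [mul_comm]
    rw [hCi]
    exact Submodule.sum_mem _ fun x₁ _ => Submodule.smul_mem _ _ (h₂ x₁)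
  refine ⟨fun i j => b₂.repr ⟨C i, hCmem i⟩ j, fun x₁ x₂ => ?_⟩
  have step1 : B x₁ x₂ = ∑ i, C i x₂ * ((b₁ i : V₁) : X₁ → ℝ) x₁ :=
    hrepr₁ (fun y => B y x₂) (h₁ x₂) x₁
  rw [step1]
  refine Finset.sum_congr rfl fun i _ => ?_
  rw [hrepr₂ (C i) (hCmem i) x₂, Finset.sum_mul]
  refine Finset.sum_congr rfl fun j _ => ?_
  ring

/-- Auxiliary: the slice of a tensor obtained by fixing the modes outside `s₁ ∪ s₂`. -/
def tslice {d : ℕ} {I : Fin d → Type*} (A : (∀ k, I k) → ℝ) (s₁ s₂ : Finset (Fin d))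
    (c : ∀ k : {k // k ∉ s₁ ∪ s₂}, I k.1)
    (x₁ : ∀ k : {k // k ∈ s₁}, I k.1) (x₂ : ∀ k : {k // k ∈ s₂}, I k.1) : ℝ :=
  A (fun k =>
    if h1 : k ∈ s₁ then x₁ ⟨k, h1⟩
    else if h2 : k ∈ s₂ then x₂ ⟨k, h2⟩
    else c ⟨k, by simp [Finset.mem_union, h1, h2]⟩)

/-- hierarchical ranks are submultiplicative at interior nodes: for
disjoint mode sets `s₁, s₂` with `t = s₁ ∪ s₂`,
`rank(M^t(A)) ≤ rank(M^{s₁}(A)) · rank(M^{s₂}(A))`. -/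
theorem matricize_rank_union_le_mul
    (d : ℕ) (I : Fin d → Type*) [∀ k, Fintype (I k)] [∀ k, DecidableEq (I k)]
    (A : (∀ j, I j) → ℝ) (s₁ s₂ : Finset (Fin d))
    (hs₁ : s₁.Nonempty) (hs₂ : s₂.Nonempty) (hdisj : Disjoint s₁ s₂)
    (hproper : s₁ ∪ s₂ ≠ Finset.univ) :
    (matricize A (s₁ ∪ s₂)).rank ≤ (matricize A s₁).rank * (matricize A s₂).rank := by
  classical
  set V₁ : Submodule ℝ ((∀ k : {k // k ∈ s₁}, I k.1) → ℝ) :=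
    Submodule.span ℝ (Set.range (matricize A s₁)ᵀ) with hV₁
  set V₂ : Submodule ℝ ((∀ k : {k // k ∈ s₂}, I k.1) → ℝ) :=
    Submodule.span ℝ (Set.range (matricize A s₂)ᵀ) with hV₂
  obtain ⟨u, v, key⟩ := aux_prod_decomp V₁ V₂
  -- each slice lies in V₁ in its first argument
  have hB₁ : ∀ (c : ∀ k : {k // k ∉ s₁ ∪ s₂}, I k.1) x₂,
      (fun x₁ => tslice A s₁ s₂ c x₁ x₂) ∈ V₁ := by
    intro c x₂
    apply Submodule.subset_span
    refine ⟨fun k => if h2 : k.1 ∈ s₂ then x₂ ⟨k.1, h2⟩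
      else c ⟨k.1, by simpa [Finset.mem_union, h2] using k.2⟩, ?_⟩
    funext x₁
    rw [Matrix.transpose_apply]
    unfold matricize tslice
    congr 1
  have hB₂ : ∀ (c : ∀ k : {k // k ∉ s₁ ∪ s₂}, I k.1) x₁,
      (fun x₂ => tslice A s₁ s₂ c x₁ x₂) ∈ V₂ := by
    intro c x₁
    apply Submodule.subset_span
    refine ⟨fun k => if h1 : k.1 ∈ s₁ then x₁ ⟨k.1, h1⟩
      else c ⟨k.1, by simpa [Finset.mem_union, h1] using k.2⟩, ?_⟩
    funext x₂
    rw [Matrix.transpose_apply]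
    unfold matricize tslice
    congr 1
    funext k
    by_cases h1 : k ∈ s₁ <;> by_cases h2 : k ∈ s₂
    · exact absurd h2 (Finset.disjoint_left.mp hdisj h1)
    · simp [h1, h2]
    · simp [h1, h2]
    · simp [h1, h2]
  choose D hD using fun c => key (tslice A s₁ s₂ c) (hB₁ c) (hB₂ c)
  -- the factorization
  set U : Matrix (∀ k : {k // k ∈ s₁ ∪ s₂}, I k.1)
      (Fin (Module.finrank ℝ V₁) × Fin (Module.finrank ℝ V₂)) ℝ :=
    fun ρ p => u p.1 (fun k => ρ ⟨k.1, Finset.mem_union_left _ k.2⟩) *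
               v p.2 (fun k => ρ ⟨k.1, Finset.mem_union_right _ k.2⟩) with hU
  set W : Matrix (Fin (Module.finrank ℝ V₁) × Fin (Module.finrank ℝ V₂))
      (∀ k : {k // k ∉ s₁ ∪ s₂}, I k.1) ℝ := fun p c => D c p.1 p.2 with hW
  have hfact : matricize A (s₁ ∪ s₂) = U * W := by
    ext ρ c
    have hslice : matricize A (s₁ ∪ s₂) ρ c =
        tslice A s₁ s₂ c (fun k => ρ ⟨k.1, Finset.mem_union_left _ k.2⟩)
          (fun k => ρ ⟨k.1, Finset.mem_union_right _ k.2⟩) := by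
      unfold matricize tslice
      congr 1
      funext k
      by_cases h1 : k ∈ s₁ <;> by_cases h2 : k ∈ s₂ <;>
        simp [Finset.mem_union, h1, h2]
    rw [hslice, hD c, Matrix.mul_apply, Fintype.sum_prod_type]
    refine Finset.sum_congr rfl fun i _ => Finset.sum_congr rfl fun j _ => ?_
    simp [hU, hW]
    ring
  calc (matricize A (s₁ ∪ s₂)).rank = (U * W).rank := by rw [hfact]
    _ ≤ U.rank := Matrix.rank_mul_le_left U W
    _ ≤ Fintype.card (Fin (Module.finrank ℝ V₁) × Fin (Module.finrank ℝ V₂)) :=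
        Matrix.rank_le_card_width U
    _ = Module.finrank ℝ V₁ * Module.finrank ℝ V₂ := by simp
    _ = (matricize A s₁).rank * (matricize A s₂).rank := by
        rw [hV₁, hV₂, Matrix.rank_eq_finrank_span_cols, Matrix.rank_eq_finrank_span_cols]
        rfl
end

section
/- Hierarchy of ranks in a dimension tree: for any tensor A and any interior node t with sons s_1, s_2, rank(M^t(A)) ≤ min over s ∈ {s_1, s_2} of rank(M^s(A)) · rank(M^{t∖s}(A)); in particular if both sons have matricisation rank 1, then rank(M^t(A)) ≤ 1. -/
/-- Every row of a matrix is a linear combination of `rank` many fixed rows. -/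
lemma row_decomp {m n : Type*} [Fintype m] [Fintype n] (M : Matrix m n ℝ) :
    ∃ (ξ : Fin M.rank → m) (u : m → Fin M.rank → ℝ),
      ∀ x y, M x y = ∑ i, u x i * M (ξ i) y := by
  obtain ⟨b, hbsub, hbspan, hbind⟩ := exists_linearIndependent ℝ (Set.range M)
  have hfin : b.Finite := (Set.finite_range M).subset hbsub
  haveI : Fintype b := hfin.fintype
  have hcard : Fintype.card b = M.rank := by
    have h1 : Fintype.card b = (Set.range ((↑) : b → (n → ℝ))).finrank ℝ :=
      linearIndependent_iff_card_eq_finrank_span.mp hbind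
    rw [h1, Subtype.range_coe]
    rw [M.rank_eq_finrank_span_row, Matrix.row, ← hbspan]
    rfl
  obtain e := (Fintype.equivFinOfCardEq hcard).symm
  have hrow : ∀ i : Fin M.rank, ∃ x : m, M x = (e i : n → ℝ) := fun i => hbsub (e i).2
  choose ξ hξ using hrow
  have hspan : ∀ x : m, M x ∈ Submodule.span ℝ (Set.range fun i => M (ξ i)) := by
    intro x
    have hr : Set.range (fun i => M (ξ i)) = b := by
      ext v; constructor
      · rintro ⟨i, rfl⟩
        show M (ξ i) ∈ b
        rw [hξ]; exact (e i).2
      · intro hv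
        refine ⟨e.symm ⟨v, hv⟩, ?_⟩
        show M (ξ (e.symm ⟨v, hv⟩)) = v
        rw [hξ, e.apply_symm_apply]
    rw [hr, hbspan]
    exact Submodule.subset_span ⟨x, rfl⟩
  choose u hu using fun x => (Submodule.mem_span_range_iff_exists_fun ℝ).mp (hspan x)
  refine ⟨ξ, u, fun x y => ?_⟩
  have := congrFun (hu x) y
  simp only [Finset.sum_apply, Pi.smul_apply, smul_eq_mul] at this
  exact this.symm

section Main

variable {d : ℕ} {I : Fin d → Type*} [∀ k, Fintype (I k)] [∀ k, DecidableEq (I k)]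

/-- restriction of a full assignment to a mode set -/
def res (s : Finset (Fin d)) (g : ∀ k, I k) : ∀ k : {k // k ∈ s}, I k.1 := fun k => g k.1

/-- patch a full assignment by values on a mode set -/
def patch (s : Finset (Fin d)) (x : ∀ k : {k // k ∈ s}, I k.1) (g : ∀ k, I k) : ∀ k, I k :=
  fun k => if h : k ∈ s then x ⟨k, h⟩ else g k

lemma tensor_decomp (A : (∀ k, I k) → ℝ) (s : Finset (Fin d)) :
    ∃ (ξ : Fin (matricize A s).rank → ∀ k : {k // k ∈ s}, I k.1)
      (u : (∀ k : {k // k ∈ s}, I k.1) → Fin (matricize A s).rank → ℝ),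
      ∀ g : ∀ k, I k, A g = ∑ i, u (res s g) i * A (patch s (ξ i) g) := by
  obtain ⟨ξ, u, hu⟩ := row_decomp (matricize A s)
  refine ⟨ξ, u, fun g => ?_⟩
  have e : A g = matricize A s (res s g) (fun k => g k.1) := by
    unfold matricize
    congr 1
    funext k
    by_cases h : k ∈ s <;> simp [res, h]
  rw [e, hu]
  rfl

lemma rank_union_le (A : (∀ k, I k) → ℝ) (s₁ s₂ : Finset (Fin d)) (hdisj : Disjoint s₁ s₂) :
    (matricize A (s₁ ∪ s₂)).rank ≤ (matricize A s₁).rank * (matricize A s₂).rank := by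
  obtain ⟨ξ, u₁, h1⟩ := tensor_decomp A s₁
  obtain ⟨η, u₂, h2⟩ := tensor_decomp A s₂
  set B : Matrix (∀ k : {k // k ∈ s₁ ∪ s₂}, I k.1)
      (Fin (matricize A s₁).rank × Fin (matricize A s₂).rank) ℝ :=
    fun r p => u₁ (fun k => r ⟨k.1, Finset.mem_union_left _ k.2⟩) p.1 *
               u₂ (fun k => r ⟨k.1, Finset.mem_union_right _ k.2⟩) p.2 with hB
  set C : Matrix (Fin (matricize A s₁).rank × Fin (matricize A s₂).rank)
      (∀ k : {k // k ∉ s₁ ∪ s₂}, I k.1) ℝ :=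
    fun p c => A (fun k => if h2 : k ∈ s₂ then η p.2 ⟨k, h2⟩ else
      if h1 : k ∈ s₁ then ξ p.1 ⟨k, h1⟩ else
      c ⟨k, by simp [Finset.mem_union, h1, h2]⟩) with hC
  have hfac : matricize A (s₁ ∪ s₂) = B * C := by
    funext r c
    set g : ∀ k, I k := fun k => if h : k ∈ s₁ ∪ s₂ then r ⟨k, h⟩ else c ⟨k, h⟩ with hg
    have e0 : matricize A (s₁ ∪ s₂) r c = A g := rfl
    have step : ∀ i, A (patch s₁ (ξ i) g) =
        ∑ j, u₂ (res s₂ g) j * C (i, j) c := by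
      intro i
      rw [h2 (patch s₁ (ξ i) g)]
      refine Finset.sum_congr rfl fun j _ => ?_
      congr 1
      · congr 1
        funext k
        have hk2 : k.1 ∈ s₂ := k.2
        have hk1 : k.1 ∉ s₁ := fun h => (Finset.disjoint_left.mp hdisj h) hk2
        simp [res, patch, hk1]
      · simp only [hC]
        congr 1
        funext k
        by_cases hk2 : k ∈ s₂
        · simp [patch, hk2]
        · by_cases hk1 : k ∈ s₁
          · simp [patch, hk1, hk2]
          · have hkt : k ∉ s₁ ∪ s₂ := by simp [Finset.mem_union, hk1, hk2]
            simp [patch, hk1, hk2, hg, hkt]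
    have e1 : ∀ i, u₁ (res s₁ g) i = u₁ (fun k => r ⟨k.1, Finset.mem_union_left _ k.2⟩) i := by
      intro i
      congr 1
      funext k
      have hkt : k.1 ∈ s₁ ∪ s₂ := Finset.mem_union_left _ k.2
      simp [res, hg, hkt]
    have e2 : ∀ j, u₂ (res s₂ g) j = u₂ (fun k => r ⟨k.1, Finset.mem_union_right _ k.2⟩) j := by
      intro j
      congr 1
      funext k
      have hkt : k.1 ∈ s₁ ∪ s₂ := Finset.mem_union_right _ k.2
      simp [res, hg, hkt]
    rw [e0, h1 g]
    rw [show (B * C) r c = ∑ i, ∑ j, B r (i, j) * C (i, j) c from by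
      rw [Matrix.mul_apply, Fintype.sum_prod_type]]
    refine Finset.sum_congr rfl fun i _ => ?_
    rw [step i, Finset.mul_sum]
    refine Finset.sum_congr rfl fun j _ => ?_
    rw [e1 i, e2 j]
    simp only [hB]
    ring
  calc (matricize A (s₁ ∪ s₂)).rank = (B * C).rank := by rw [hfac]
    _ ≤ B.rank := Matrix.rank_mul_le_left B C
    _ ≤ Fintype.card (Fin (matricize A s₁).rank × Fin (matricize A s₂).rank) :=
        B.rank_le_card_width
    _ = (matricize A s₁).rank * (matricize A s₂).rank := by simp

end Main

/-- for an interior node `t = s₁ ∪ s₂` (disjoint sons),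
`rank(M^t(A)) ≤ min_{s ∈ {s₁,s₂}} rank(M^s(A)) · rank(M^{t∖s}(A))`; in particular if
both sons have matricisation rank at most 1, then `rank(M^t(A)) ≤ 1`. -/
theorem matricize_rank_interior_node
    (d : ℕ) (I : Fin d → Type*) [∀ k, Fintype (I k)] [∀ k, DecidableEq (I k)]
    (A : (∀ j, I j) → ℝ) (s₁ s₂ : Finset (Fin d))
    (hs₁ : s₁.Nonempty) (hs₂ : s₂.Nonempty) (hdisj : Disjoint s₁ s₂)
    (hproper : s₁ ∪ s₂ ≠ Finset.univ) :
    ((matricize A (s₁ ∪ s₂)).rank ≤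
        min ((matricize A s₁).rank * (matricize A ((s₁ ∪ s₂) \ s₁)).rank)
            ((matricize A s₂).rank * (matricize A ((s₁ ∪ s₂) \ s₂)).rank)) ∧
    ((matricize A s₁).rank ≤ 1 → (matricize A s₂).rank ≤ 1 →
        (matricize A (s₁ ∪ s₂)).rank ≤ 1) := by
  have hd1 : (s₁ ∪ s₂) \ s₁ = s₂ := Finset.union_sdiff_cancel_left hdisj
  have hd2 : (s₁ ∪ s₂) \ s₂ = s₁ := Finset.union_sdiff_cancel_right hdisj
  have h12 := rank_union_le A s₁ s₂ hdisj
  have h21 := rank_union_le A s₂ s₁ hdisj.symm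
  rw [Finset.union_comm s₂ s₁] at h21
  constructor
  · rw [hd1, hd2]
    exact le_min h12 h21
  · intro ha hb
    calc (matricize A (s₁ ∪ s₂)).rank ≤ _ := h12
      _ ≤ 1 * 1 := Nat.mul_le_mul ha hb
      _ = 1 := by norm_num
end
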